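/- arXiv:1702.05603 — 8 statements merged into one kernel-verified Lean document; each statement's English description precedes it below -/
import Mathlib

section
/- Let S be a feasible single-machine schedule in which job i is immediately followed by job k, i.e., S k = S i + p i. Let S' be the schedule obtained by swapping i and k: S' k = S i, S' i = S i + p k, and S' j = S j for all other jobs j. Then S' is feasible and ∑_{j∈J} w j · (S' j + p j) − ∑_{j∈J} w j · (S j + p j) = w i · p k − w k · p i. -/
open Finset

/-- Swapping two consecutive jobs `i` and `k` (with `k` immediately following `i`)
in a feasible single-machine schedule yields a feasible schedule, and changes the
total weighted completion time by exactly `w i * p k - w k * p i`. -/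
theorem adjacent_swap
    {J : Type*} [Fintype J] [Nonempty J] [DecidableEq J]
    (p : J → ℕ) (w : J → ℚ) (T0 Tf : ℕ)
    (hp : ∀ j, 1 ≤ p j) (hT : T0 + ∑ j, p j ≤ Tf)
    (S : J → ℕ)
    (hlo : ∀ j, T0 ≤ S j) (hhi : ∀ j, S j + p j ≤ Tf)
    (hov : ∀ j k, j ≠ k → S j + p j ≤ S k ∨ S k + p k ≤ S j)
    (i k : J) (hik : i ≠ k) (hadj : S k = S i + p i)
    (S' : J → ℕ)
    (hS' : ∀ j, S' j = if j = k then S i else if j = i then S i + p k else S j) :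
    ((∀ j, T0 ≤ S' j) ∧ (∀ j, S' j + p j ≤ Tf) ∧
      (∀ j l, j ≠ l → S' j + p j ≤ S' l ∨ S' l + p l ≤ S' j)) ∧
    (∑ j, w j * ((S' j + p j : ℕ) : ℚ)) - (∑ j, w j * ((S j + p j : ℕ) : ℚ))
      = w i * (p k : ℚ) - w k * (p i : ℚ) := by
  have hS'k : S' k = S i := by rw [hS']; simp
  have hS'i : S' i = S i + p k := by rw [hS']; simp [hik]
  have hS'j : ∀ j, j ≠ i → j ≠ k → S' j = S j := by
    intro j h1 h2; rw [hS']; simp [h1, h2]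
  -- key separation fact for jobs outside {i,k}
  have hsep : ∀ j, j ≠ i → j ≠ k → S j + p j ≤ S i ∨ S i + p i + p k ≤ S j := by
    intro j h1 h2
    rcases hov j i h1 with h | h
    · exact Or.inl h
    · rcases hov j k h2 with h' | h' 
      · exfalso
        have := hp j
        omega
      · right; omega
  refine ⟨⟨?_, ?_, ?_⟩, ?_⟩
  · intro j
    by_cases hj1 : j = k
    · subst hj1; rw [hS'k]; exact hlo i
    by_cases hj2 : j = i
    · rw [hj2, hS'i]; have := hlo i; omega
    · rw [hS'j j hj2 hj1]; exact hlo j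
  · intro j
    have hki : S k + p k ≤ Tf := hhi k
    by_cases hj1 : j = k
    · rw [hj1, hS'k]; have := hp i; omega
    by_cases hj2 : j = i
    · rw [hj2, hS'i]; omega
    · rw [hS'j j hj2 hj1]; exact hhi j
  · intro j l hjl
    by_cases hj1 : j = k
    · by_cases hl2 : l = i
      · rw [hj1, hl2]; left; rw [hS'k, hS'i]
      · have hlk : l ≠ k := fun h => hjl (hj1.trans h.symm)
        rw [hj1, hS'k, hS'j l hl2 hlk]
        rcases hsep l hl2 hlk with h | h
        · right; omega
        · left; omega
    by_cases hj2 : j = i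
    · by_cases hl1 : l = k
      · rw [hj2, hl1]; right; rw [hS'k, hS'i]
      · have hli : l ≠ i := fun h => hjl (hj2.trans h.symm)
        rw [hj2, hS'i, hS'j l hli hl1]
        rcases hsep l hli hl1 with h | h
        · right; omega
        · left; omega
    · rw [hS'j j hj2 hj1]
      by_cases hl1 : l = k
      · subst hl1; rw [hS'k]
        rcases hsep j hj2 hj1 with h | h
        · left; omega
        · right; omega
      by_cases hl2 : l = i
      · subst hl2; rw [hS'i]
        rcases hsep j hj2 hj1 with h | h
        · left; omega
        · right; omega
      · rw [hS'j l hl2 hl1]; exact hov j l hjl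
  · rw [← Finset.sum_sub_distrib]
    have hzero : ∀ j ∈ Finset.univ, j ∉ ({i, k} : Finset J) →
        w j * ((S' j + p j : ℕ) : ℚ) - w j * ((S j + p j : ℕ) : ℚ) = 0 := by
      intro j _ hj
      simp only [Finset.mem_insert, Finset.mem_singleton, not_or] at hj
      rw [hS'j j hj.1 hj.2]; ring
    rw [← Finset.sum_subset (Finset.subset_univ ({i, k} : Finset J)) hzero,
      Finset.sum_pair hik, hS'i, hS'k, hadj]
    push_cast
    ring
end

section
/- (Smith's WSPT rule.) Suppose all weights are nonnegative: w j ≥ 0 for every j ∈ J. Then the early WSPT schedule minimizes the total weighted completion time: for every feasible single-machine schedule S, ∑_{j∈J} w j · (S_WSPT j + p j) ≤ ∑_{j∈J} w j · (S j + p j), where S_WSPT denotes the early WSPT schedule. -/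
open Finset

/-!
In any feasible schedule the jobs started no later than `j` occupy disjoint slots of
`[T0, S j + p j)`, so `S j + p j ≥ T0 + ∑_{S k ≤ S j} p k`; the early WSPT schedule attains
this bound with equality for its own order. Both total costs are thereby compared through
`∑_j w j * T0 + ∑_{k before j} w j * p k`. For each pair `{j, k}` of jobs the WSPT order pays
`min (w j * p k) (w k * p j)` (Smith's ratio condition), while any other order pays at least
one of the two terms.
-/

theorem sum_le_sub_of_pairwise_nonoverlapping {ι : Type*} (s : Finset ι) (S p : ι → ℕ)
    (T0 E : ℕ) (hin : ∀ k ∈ s, T0 ≤ S k ∧ S k + p k ≤ E)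
    (hs : (s : Set ι).Pairwise fun j k => S j + p j ≤ S k ∨ S k + p k ≤ S j) :
    ∑ k ∈ s, p k ≤ E - T0 := by
  classical
  have hsub : s.biUnion (fun k => Ico (S k) (S k + p k)) ⊆ Ico T0 E := by
    intro x hx
    obtain ⟨k, hk, hxk⟩ := mem_biUnion.1 hx
    have := hin k hk
    rw [mem_Ico] at hxk ⊢
    omega
  have hdisj : (s : Set ι).PairwiseDisjoint fun k => Ico (S k) (S k + p k) := by
    intro j hj k hk hjk
    refine disjoint_left.2 fun x hxj hxk => ?_
    rw [mem_Ico] at hxj hxk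
    rcases hs hj hk hjk with h | h <;> omega
  calc ∑ k ∈ s, p k = #(s.biUnion fun k => Ico (S k) (S k + p k)) := by
        rw [card_biUnion hdisj]; simp
    _ ≤ #(Ico T0 E) := card_le_card hsub
    _ = E - T0 := Nat.card_Ico T0 E

theorem add_sum_earlier_le_completion {J : Type*} [Fintype J] (p S : J → ℕ) (T0 : ℕ)
    (hp : ∀ j, 1 ≤ p j) (hlo : ∀ j, T0 ≤ S j)
    (hnol : ∀ j k, j ≠ k → S j + p j ≤ S k ∨ S k + p k ≤ S j) (j : J) :
    T0 + ∑ k with S k ≤ S j, p k ≤ S j + p j := by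
  have hin : ∀ k ∈ ({k | S k ≤ S j} : Finset J), T0 ≤ S k ∧ S k + p k ≤ S j + p j := by
    intro k hk
    rw [mem_filter_univ] at hk
    refine ⟨hlo k, ?_⟩
    rcases eq_or_ne k j with rfl | hkj
    · rfl
    · have := hp j
      rcases hnol k j hkj with h | h <;> omega
  have := sum_le_sub_of_pairwise_nonoverlapping _ S p T0 _ hin fun k _ l _ hkl => hnol k l hkl
  have := hlo j
  omega

theorem contiguous_completion_eq_sum_Iic {n : ℕ} (T0 : ℕ) (S p : Fin n → ℕ)
    (h0 : ∀ h : 0 < n, S ⟨0, h⟩ = T0)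
    (hstep : ∀ i (h : i + 1 < n),
      S ⟨i + 1, h⟩ = S ⟨i, Nat.lt_of_succ_lt h⟩ + p ⟨i, Nat.lt_of_succ_lt h⟩)
    (i : Fin n) : S i + p i = T0 + ∑ l ∈ Iic i, p l := by
  obtain ⟨m, hm⟩ := i
  induction m with
  | zero =>
    have : Iic (⟨0, hm⟩ : Fin n) = {⟨0, hm⟩} := by
      ext l; simp [Fin.le_def, Fin.ext_iff]
    rw [this, sum_singleton, h0]
  | succ m ih =>
    have : Iio (⟨m + 1, hm⟩ : Fin n) = Iic ⟨m, by omega⟩ := by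
      ext l; simp [Fin.le_def, Fin.lt_def]
    rw [Iic_eq_cons_Iio, sum_cons, this, hstep m hm, ih]
    ring

theorem sum_sum_filter_le_of_pairwise_exchange {ι α : Type*} [Fintype ι] [AddCommMonoid α]
    [LinearOrder α] [IsOrderedCancelAddMonoid α] (c : ι → ι → α) (hc : ∀ i l, 0 ≤ c i l)
    (P R : ι → ι → Prop) [DecidableRel P] [DecidableRel R]
    (hPtot : ∀ i l, P i l ∨ P l i) (hPanti : ∀ i l, P i l → P l i → i = l)
    (hPc : ∀ i l, P l i → c i l ≤ c l i) (hRtot : ∀ i l, R i l ∨ R l i) :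
    ∑ i, ∑ l with P l i, c i l ≤ ∑ i, ∑ l with R l i, c i l := by
  set cP : ι → ι → α := fun i l => if P l i then c i l else 0
  set cR : ι → ι → α := fun i l => if R l i then c i l else 0
  have hcR : ∀ i l, 0 ≤ cR i l := fun i l => by
    simp only [cR]; split_ifs <;> simp [hc]
  have hpair_of_P : ∀ i l, P l i → cP i l + cP l i ≤ cR i l + cR l i := by
    intro i l hli
    rcases eq_or_ne i l with rfl | hne
    · simp [cP, cR, hli, (hRtot i i).elim id id]
    have hil : ¬ P i l := fun h => hne (hPanti i l h hli)
    simp only [cP, hli, hil, if_true, if_false, add_zero]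
    rcases hRtot l i with h | h
    · calc c i l = cR i l := by simp [cR, h]
        _ ≤ cR i l + cR l i := le_add_of_nonneg_right (hcR l i)
    · calc c i l ≤ c l i := hPc i l hli
        _ = cR l i := by simp [cR, h]
        _ ≤ cR i l + cR l i := le_add_of_nonneg_left (hcR i l)
  have hpair : ∀ i l, cP i l + cP l i ≤ cR i l + cR l i := fun i l =>
    (hPtot l i).elim (hpair_of_P i l) fun h => by
      simpa only [add_comm] using hpair_of_P l i h
  have hdouble : ∀ f : ι → ι → α,
      ∑ i, ∑ l, (f i l + f l i) = ∑ i, ∑ l, f i l + ∑ i, ∑ l, f i l := by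
    intro f
    simp only [sum_add_distrib]
    rw [sum_comm (f := fun i l => f l i)]
  have htwice : ∑ i, ∑ l, cP i l + ∑ i, ∑ l, cP i l ≤ ∑ i, ∑ l, cR i l + ∑ i, ∑ l, cR i l := by
    rw [← hdouble, ← hdouble]
    exact sum_le_sum fun i _ => sum_le_sum fun l _ => hpair i l
  simp only [sum_filter]
  by_contra! h
  exact htwice.not_gt (add_lt_add h h)

theorem antitone_fin_of_succ_le {α : Type*} [Preorder α] {n : ℕ} {f : Fin n → α}
    (h : ∀ i (h : i + 1 < n), f ⟨i + 1, h⟩ ≤ f ⟨i, Nat.lt_of_succ_lt h⟩) :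
    Antitone f := by
  cases n with
  | zero => exact fun a => a.elim0
  | succ n => exact Fin.antitone_iff_succ_le.2 fun i => h i i.succ.2

theorem wspt_minimizes_weighted_completion_general
    {J : Type*} [Fintype J] [Nonempty J]
    (p : J → ℕ) (w : J → ℚ) (T0 Tf : ℕ)
    (hp : ∀ j, 1 ≤ p j)
    (hw : ∀ j, 0 ≤ w j)
    (e : Fin (Fintype.card J) ≃ J)
    (hord : ∀ i : ℕ, ∀ h : i + 1 < Fintype.card J,
      w (e ⟨i + 1, h⟩) / (p (e ⟨i + 1, h⟩) : ℚ)
        ≤ w (e ⟨i, Nat.lt_of_succ_lt h⟩) / (p (e ⟨i, Nat.lt_of_succ_lt h⟩) : ℚ))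
    (SW : J → ℕ)
    (hSW0 : SW (e ⟨0, Fintype.card_pos⟩) = T0)
    (hSWstep : ∀ i : ℕ, ∀ h : i + 1 < Fintype.card J,
      SW (e ⟨i + 1, h⟩)
        = SW (e ⟨i, Nat.lt_of_succ_lt h⟩) + p (e ⟨i, Nat.lt_of_succ_lt h⟩)) :
    ∀ S : J → ℕ,
      (∀ j, T0 ≤ S j) → (∀ j, S j + p j ≤ Tf) →
      (∀ j k, j ≠ k → S j + p j ≤ S k ∨ S k + p k ≤ S j) →
      ∑ j, w j * ((SW j + p j : ℕ) : ℚ) ≤ ∑ j, w j * ((S j + p j : ℕ) : ℚ) := by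
  intro S hlo _ hnol
  have hSW : ∀ j, SW j + p j = T0 + ∑ k with e.symm k ≤ e.symm j, p k := fun j => by
    have := contiguous_completion_eq_sum_Iic T0 (SW ∘ e) (p ∘ e) (fun _ => hSW0) hSWstep
      (e.symm j)
    simp only [Function.comp_apply, e.apply_symm_apply] at this
    rw [this, sum_equiv e (t := {k | e.symm k ≤ e.symm j}) (by simp) fun _ _ => rfl]
  have hpos : ∀ j, (0 : ℚ) < p j := fun j => Nat.cast_pos.2 (hp j)
  have hsmith : ∀ j k, e.symm k ≤ e.symm j → w j * p k ≤ w k * p j := fun j k hkj => by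
    have := antitone_fin_of_succ_le (f := fun i => w (e i) / p (e i)) hord hkj
    simp only [e.apply_symm_apply] at this
    exact (div_le_div_iff₀ (hpos j) (hpos k)).1 this
  calc ∑ j, w j * ((SW j + p j : ℕ) : ℚ)
      = ∑ j, w j * (T0 + ∑ k with e.symm k ≤ e.symm j, (p k : ℚ)) := by
        simp only [hSW, Nat.cast_add, Nat.cast_sum]
    _ ≤ ∑ j, w j * (T0 + ∑ k with S k ≤ S j, (p k : ℚ)) := by
        simp only [mul_add, sum_add_distrib, mul_sum]
        refine add_le_add le_rfl ?_
        exact sum_sum_filter_le_of_pairwise_exchange (fun j k => w j * p k)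
          (fun j k => mul_nonneg (hw j) (hpos k).le) (fun k j => e.symm k ≤ e.symm j)
          (fun k j => S k ≤ S j) (fun _ _ => le_total _ _)
          (fun _ _ h h' => e.symm.injective (le_antisymm h h')) hsmith fun _ _ => le_total _ _
    _ ≤ ∑ j, w j * ((S j + p j : ℕ) : ℚ) := by
        gcongr with j
        · exact hw j
        · exact_mod_cast add_sum_earlier_le_completion p S T0 hp hlo hnol j

/-- Smith's WSPT rule: with nonnegative weights, the early WSPT schedule minimizes
the total weighted completion time over all feasible single-machine schedules. -/
theorem wspt_minimizes_weighted_completion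
    {J : Type*} [Fintype J] [Nonempty J]
    (p : J → ℕ) (w : J → ℚ) (T0 Tf : ℕ)
    (hp : ∀ j, 1 ≤ p j) (hT : T0 + ∑ j, p j ≤ Tf)
    (hw : ∀ j, 0 ≤ w j)
    (e : Fin (Fintype.card J) ≃ J)
    (hord : ∀ i : ℕ, ∀ h : i + 1 < Fintype.card J,
      w (e ⟨i + 1, h⟩) / (p (e ⟨i + 1, h⟩) : ℚ)
        ≤ w (e ⟨i, Nat.lt_of_succ_lt h⟩) / (p (e ⟨i, Nat.lt_of_succ_lt h⟩) : ℚ))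
    (SW : J → ℕ)
    (hSW0 : SW (e ⟨0, Fintype.card_pos⟩) = T0)
    (hSWstep : ∀ i : ℕ, ∀ h : i + 1 < Fintype.card J,
      SW (e ⟨i + 1, h⟩)
        = SW (e ⟨i, Nat.lt_of_succ_lt h⟩) + p (e ⟨i, Nat.lt_of_succ_lt h⟩)) :
    ∀ S : J → ℕ,
      (∀ j, T0 ≤ S j) → (∀ j, S j + p j ≤ Tf) →
      (∀ j k, j ≠ k → S j + p j ≤ S k ∨ S k + p k ≤ S j) →
      ∑ j, w j * ((SW j + p j : ℕ) : ℚ) ≤ ∑ j, w j * ((S j + p j : ℕ) : ℚ) :=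
  wspt_minimizes_weighted_completion_general p w T0 Tf hp hw e hord SW hSW0 hSWstep
end

section
/- (WSPT-TRD optimality, Part I.) Suppose all weights are nonnegative: w j ≥ 0 for every j ∈ J. Then the early WSPT schedule minimizes obj over all feasible single-machine schedules: obj(S_WSPT) ≤ obj(S) for every feasible schedule S, where S_WSPT denotes the early WSPT schedule. -/
/-! The two terms of the objective are minimized separately. The early WSPT schedule has no
idle time, so its makespan is `T0 + ∑ p`, a lower bound for every makespan. Every schedule `S`
starts job `k` no earlier than `T0` plus the processing times of the jobs finishing before it, so
`∑ w S ≥ T0 ∑ w + ∑ {p j * w k | j precedes k}`, with equality for the WSPT schedule. Both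
orders are tournaments on the jobs, and the WSPT order minimizes the last sum: reversing a pair
`j, k` of it replaces `p j * w k` by `p k * w j ≥ p j * w k`. -/

open Finset

structure IsTournament {α : Type*} (r : α → α → Prop) : Prop where
  asymm : ∀ ⦃a b⦄, r a b → ¬ r b a
  total : ∀ ⦃a b⦄, a ≠ b → r a b ∨ r b a

lemma IsTournament.of_injective {α β : Type*} [LinearOrder β] {f : α → β}
    (hf : Function.Injective f) : IsTournament (fun a b => f a < f b) where
  asymm _ _ h := h.not_gt
  total _ _ hab := (hf.ne hab).lt_or_gt

theorem IsTournament.sum_le_sum {α M : Type*} [Fintype α]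
    [AddCommGroup M] [LinearOrder M] [IsOrderedAddMonoid M]
    {r s : α → α → Prop} [DecidableRel r] [DecidableRel s]
    (hr : IsTournament r) (hs : IsTournament s) (g : α → α → M)
    (hg : ∀ a b, s a b → g a b ≤ g b a) :
    ∑ b, ∑ a ∈ univ.filter (s · b), g a b
      ≤ ∑ b, ∑ a ∈ univ.filter (r · b), g a b := by
  set D : α → α → M := fun a b => (if r a b then g a b else 0) - if s a b then g a b else 0
  have hpair : ∀ a b, 0 ≤ D a b + D b a := by
    intro a b
    rcases eq_or_ne a b with rfl | hab
    · simp [D, show ¬ r a a from fun h => hr.asymm h h,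
        show ¬ s a a from fun h => hs.asymm h h]
    rcases hr.total hab with hr' | hr' <;> rcases hs.total hab with hs' | hs' <;>
      simp [D, hr', hs', hr.asymm hr', hs.asymm hs', hg a b, hg b a]
  have hD : 0 ≤ ∑ b, ∑ a, D a b := by
    -- transposing the square turns twice the sum into the sum of the `D a b + D b a`
    have h2 : 0 ≤ ∑ b, ∑ a, D a b + ∑ b, ∑ a, D a b := by
      nth_rewrite 2 [sum_comm]
      rw [← sum_add_distrib]
      exact sum_nonneg fun b _ => by
        rw [← sum_add_distrib]; exact sum_nonneg fun a _ => hpair a b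
    by_contra! h
    exact (add_neg h h).not_ge h2
  simpa [D, sum_sub_distrib, sum_filter] using hD

lemma add_sum_le_of_pairwise_nonoverlapping {J : Type*} {F : Finset J} {S p : J → ℕ} {a b : ℕ}
    (hab : a ≤ b) (ha : ∀ j ∈ F, a ≤ S j) (hb : ∀ j ∈ F, S j + p j ≤ b)
    (hF : (F : Set J).Pairwise fun j k => S j + p j ≤ S k ∨ S k + p k ≤ S j) :
    a + ∑ j ∈ F, p j ≤ b := by
  have hdisj : (F : Set J).PairwiseDisjoint fun j => Ico (S j) (S j + p j) := by
    intro j hj k hk hjk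
    rw [Function.onFun, disjoint_left]
    intro x hx hx'
    simp only [mem_Ico] at hx hx'
    rcases hF hj hk hjk with h | h <;> omega
  have hsub : F.biUnion (fun j => Ico (S j) (S j + p j)) ⊆ Ico a b := by
    intro x hx
    obtain ⟨j, hj, hx⟩ := mem_biUnion.mp hx
    rw [mem_Ico] at hx ⊢
    have := ha j hj
    have := hb j hj
    omega
  have hcard := card_le_card hsub
  rw [card_biUnion hdisj, Nat.card_Ico] at hcard
  simp only [Nat.card_Ico, Nat.add_sub_cancel_left] at hcard
  omega

section Schedule

variable {J : Type*} {p S : J → ℕ}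

lemma isTournament_precedes (hp : ∀ j, 1 ≤ p j)
    (hS : ∀ j k, j ≠ k → S j + p j ≤ S k ∨ S k + p k ≤ S j) :
    IsTournament fun j k => S j + p j ≤ S k where
  asymm j k h h' := by have := hp j; have := hp k; omega
  total _ _ hjk := hS _ _ hjk

lemma add_sum_precedes_le [Fintype J] {T0 : ℕ} (hT0 : ∀ j, T0 ≤ S j)
    (hS : ∀ j k, j ≠ k → S j + p j ≤ S k ∨ S k + p k ≤ S j) (k : J) :
    T0 + ∑ j ∈ univ.filter (fun j => S j + p j ≤ S k), p j ≤ S k :=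
  add_sum_le_of_pairwise_nonoverlapping (hT0 k) (fun j _ => hT0 j)
    (fun _ hj => (mem_filter.mp hj).2)
    fun _ _ _ _ hjl => hS _ _ hjl

lemma add_sum_le_sup' [Fintype J] [Nonempty J] {T0 : ℕ} (hT0 : ∀ j, T0 ≤ S j)
    (hS : ∀ j k, j ≠ k → S j + p j ≤ S k ∨ S k + p k ≤ S j) :
    T0 + ∑ j, p j ≤ univ.sup' univ_nonempty (fun j => S j + p j) := by
  obtain ⟨j₀⟩ := ‹Nonempty J›
  have hle_sup' (j : J) : S j + p j ≤ univ.sup' univ_nonempty (fun j => S j + p j) :=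
    le_sup' (fun j => S j + p j) (mem_univ j)
  exact add_sum_le_of_pairwise_nonoverlapping ((hT0 j₀).trans (le_of_add_le_left (hle_sup' j₀)))
    (fun j _ => hT0 j) (fun j _ => hle_sup' j) fun _ _ _ _ hjk => hS _ _ hjk

end Schedule

lemma Fin.antitone_of_succ_le {α : Type*} [Preorder α] {n : ℕ} {f : Fin n → α}
    (hf : ∀ i : ℕ, ∀ h : i + 1 < n, f ⟨i + 1, h⟩ ≤ f ⟨i, Nat.lt_of_succ_lt h⟩) :
    Antitone f := by
  rintro ⟨a, ha⟩ ⟨b, hb⟩ hab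
  rw [Fin.mk_le_mk] at hab
  induction b, hab using Nat.le_induction with
  | base => rfl
  | succ b hab ih => exact (hf b hb).trans (ih _)

lemma mul_le_mul_of_wspt_order {J : Type*} [Fintype J] {p : J → ℕ} {w : J → ℚ}
    (hp : ∀ j, 1 ≤ p j) {e : Fin (Fintype.card J) ≃ J}
    (hord : ∀ i : ℕ, ∀ h : i + 1 < Fintype.card J,
      w (e ⟨i + 1, h⟩) / (p (e ⟨i + 1, h⟩) : ℚ)
        ≤ w (e ⟨i, Nat.lt_of_succ_lt h⟩) / (p (e ⟨i, Nat.lt_of_succ_lt h⟩) : ℚ))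
    {j k : J} (hjk : e.symm j < e.symm k) :
    (p j : ℚ) * w k ≤ p k * w j := by
  have hratio := Fin.antitone_of_succ_le (f := fun i => w (e i) / (p (e i) : ℚ)) hord hjk.le
  simp only [e.apply_symm_apply] at hratio
  have hpj : (0 : ℚ) < p j := by exact_mod_cast hp j
  have hpk : (0 : ℚ) < p k := by exact_mod_cast hp k
  rw [div_le_div_iff₀ hpk hpj] at hratio
  linarith

section Contiguous

variable {J : Type*} [Fintype J] [Nonempty J] (p : J → ℕ) (T0 : ℕ)
  (e : Fin (Fintype.card J) ≃ J) (SW : J → ℕ)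

lemma eq_add_sum_of_contiguous (hSW0 : SW (e ⟨0, Fintype.card_pos⟩) = T0)
    (hSWstep : ∀ i : ℕ, ∀ h : i + 1 < Fintype.card J,
      SW (e ⟨i + 1, h⟩)
        = SW (e ⟨i, Nat.lt_of_succ_lt h⟩) + p (e ⟨i, Nat.lt_of_succ_lt h⟩)) (k : J) :
    SW k = T0 + ∑ j ∈ univ.filter (fun j => e.symm j < e.symm k), p j := by
  suffices h : ∀ i (hi : i < Fintype.card J),
      SW (e ⟨i, hi⟩) = T0 + ∑ j ∈ univ.filter (fun j => (e.symm j : ℕ) < i), p j by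
    have hk := h _ (e.symm k).isLt
    rwa [Fin.eta, e.apply_symm_apply] at hk
  intro i
  induction i with
  | zero => intro hi; rw [hSW0]; simp
  | succ i ih =>
    intro hi
    classical
    have hfilter : univ.filter (fun j => (e.symm j : ℕ) < i + 1)
        = insert (e ⟨i, Nat.lt_of_succ_lt hi⟩) (univ.filter fun j => (e.symm j : ℕ) < i) := by
      ext j
      simp only [mem_filter, mem_univ, true_and, mem_insert, ← e.symm_apply_eq, Fin.ext_iff]
      omega
    rw [hSWstep i hi, ih, hfilter, sum_insert (by simp)]
    ring

lemma sup'_le_add_sum_of_eq_add_sum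
    (hSW : ∀ k, SW k = T0 + ∑ j ∈ univ.filter (fun j => e.symm j < e.symm k), p j) :
    univ.sup' univ_nonempty (fun j => SW j + p j) ≤ T0 + ∑ j, p j := by
  refine sup'_le _ _ fun k _ => ?_
  rw [hSW, add_assoc, ← sum_filter_add_sum_filter_not univ (fun j => e.symm j < e.symm k)]
  gcongr
  exact single_le_sum (fun _ _ => Nat.zero_le _) (by simp)

end Contiguous

lemma sum_mul_add_sum_filter {α R : Type*} [Fintype α] [CommSemiring R] (r : α → α → Prop)
    [DecidableRel r] (w q : α → R) (c : R) :
    ∑ k, w k * (c + ∑ j ∈ univ.filter (r · k), q j)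
      = ∑ k, w k * c + ∑ k, ∑ j ∈ univ.filter (r · k), q j * w k := by
  rw [← sum_add_distrib]
  refine sum_congr rfl fun k _ => ?_
  rw [mul_add, mul_sum]
  simp only [mul_comm]

theorem wspt_trd_part_one_general
    {J : Type*} [Fintype J] [Nonempty J]
    (p : J → ℕ) (w : J → ℚ) (T0 Tf : ℕ)
    (hp : ∀ j, 1 ≤ p j)
    (hw : ∀ j, 0 ≤ w j)
    (e : Fin (Fintype.card J) ≃ J)
    (hord : ∀ i : ℕ, ∀ h : i + 1 < Fintype.card J,
      w (e ⟨i + 1, h⟩) / (p (e ⟨i + 1, h⟩) : ℚ)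
        ≤ w (e ⟨i, Nat.lt_of_succ_lt h⟩) / (p (e ⟨i, Nat.lt_of_succ_lt h⟩) : ℚ))
    (SW : J → ℕ)
    (hSW0 : SW (e ⟨0, Fintype.card_pos⟩) = T0)
    (hSWstep : ∀ i : ℕ, ∀ h : i + 1 < Fintype.card J,
      SW (e ⟨i + 1, h⟩)
        = SW (e ⟨i, Nat.lt_of_succ_lt h⟩) + p (e ⟨i, Nat.lt_of_succ_lt h⟩)) :
    ∀ S : J → ℕ,
      (∀ j, T0 ≤ S j) → (∀ j, S j + p j ≤ Tf) →
      (∀ j k, j ≠ k → S j + p j ≤ S k ∨ S k + p k ≤ S j) →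
      ((univ.sup' univ_nonempty (fun j => SW j + p j) : ℕ) : ℚ)
          + ∑ j, w j * (SW j : ℚ)
        ≤ ((univ.sup' univ_nonempty (fun j => S j + p j) : ℕ) : ℚ)
          + ∑ j, w j * (S j : ℚ) := by
  intro S hT0 _ hS
  have hSW := eq_add_sum_of_contiguous p T0 e SW hSW0 hSWstep
  have hCmax : univ.sup' univ_nonempty (fun j => SW j + p j)
      ≤ univ.sup' univ_nonempty (fun j => S j + p j) :=
    (sup'_le_add_sum_of_eq_add_sum p T0 e SW hSW).trans (add_sum_le_sup' hT0 hS)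
  have hsum : ∑ k, w k * (SW k : ℚ) ≤ ∑ k, w k * (S k : ℚ) := calc
    ∑ k, w k * (SW k : ℚ)
        = ∑ k, w k * T0
          + ∑ k, ∑ j ∈ univ.filter (fun j => e.symm j < e.symm k), p j * w k := by
      rw [← sum_mul_add_sum_filter]
      push_cast [hSW]
      rfl
    _ ≤ ∑ k, w k * T0
          + ∑ k, ∑ j ∈ univ.filter (fun j => S j + p j ≤ S k), p j * w k := by
      gcongr 1
      exact (isTournament_precedes hp hS).sum_le_sum (.of_injective e.symm.injective) _
        fun _ _ => mul_le_mul_of_wspt_order hp hord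
    _ = ∑ k, w k * (T0 + ∑ j ∈ univ.filter (fun j => S j + p j ≤ S k), (p j : ℚ)) :=
      (sum_mul_add_sum_filter _ _ _ _).symm
    _ ≤ ∑ k, w k * (S k : ℚ) := sum_le_sum fun k _ => mul_le_mul_of_nonneg_left
      (by exact_mod_cast add_sum_precedes_le hT0 hS k) (hw k)
  exact add_le_add (by exact_mod_cast hCmax) hsum

/-- WSPT-TRD optimality, Part I: with nonnegative weights, the early WSPT schedule
minimizes `obj(S) = Cmax(S) + ∑ j, w j * S j` over all feasible schedules. -/
theorem wspt_trd_part_one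
    {J : Type*} [Fintype J] [Nonempty J]
    (p : J → ℕ) (w : J → ℚ) (T0 Tf : ℕ)
    (hp : ∀ j, 1 ≤ p j) (hT : T0 + ∑ j, p j ≤ Tf)
    (hw : ∀ j, 0 ≤ w j)
    (e : Fin (Fintype.card J) ≃ J)
    (hord : ∀ i : ℕ, ∀ h : i + 1 < Fintype.card J,
      w (e ⟨i + 1, h⟩) / (p (e ⟨i + 1, h⟩) : ℚ)
        ≤ w (e ⟨i, Nat.lt_of_succ_lt h⟩) / (p (e ⟨i, Nat.lt_of_succ_lt h⟩) : ℚ))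
    (SW : J → ℕ)
    (hSW0 : SW (e ⟨0, Fintype.card_pos⟩) = T0)
    (hSWstep : ∀ i : ℕ, ∀ h : i + 1 < Fintype.card J,
      SW (e ⟨i + 1, h⟩)
        = SW (e ⟨i, Nat.lt_of_succ_lt h⟩) + p (e ⟨i, Nat.lt_of_succ_lt h⟩)) :
    ∀ S : J → ℕ,
      (∀ j, T0 ≤ S j) → (∀ j, S j + p j ≤ Tf) →
      (∀ j k, j ≠ k → S j + p j ≤ S k ∨ S k + p k ≤ S j) →
      ((univ.sup' univ_nonempty (fun j => SW j + p j) : ℕ) : ℚ)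
          + ∑ j, w j * (SW j : ℚ)
        ≤ ((univ.sup' univ_nonempty (fun j => S j + p j) : ℕ) : ℚ)
          + ∑ j, w j * (S j : ℚ) :=
  wspt_trd_part_one_general p w T0 Tf hp hw e hord SW hSW0 hSWstep
end

section
/- (WSPT-TRD optimality, Part II, early case.) Suppose all weights are nonpositive (w j ≤ 0 for every j ∈ J) and the sum of the weights satisfies ∑_{j∈J} w j ≥ −1. Then the early WSPT schedule minimizes obj over all feasible single-machine schedules: obj(S_WSPT) ≤ obj(S) for every feasible schedule S, where S_WSPT denotes the early WSPT schedule. -/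
/-!
Write `M` for the makespan of a feasible schedule `S` and `W = ∑ j, w j ∈ [-1, 0]`. Packing the
jobs that start after `j` into `[S j + p j, M]` gives `S j ≤ M - p j - A j`, where `A j` is the
work started after `j`; as `w j ≤ 0` this yields `obj S ≥ (1 + W) M - ∑ w j p j - ∑ w j A j`,
with equality for the early WSPT schedule, whose makespan `T0 + ∑ p` is the least possible.
Since `1 + W ≥ 0`, it remains to see that `∑ w j A j = ∑_{j before k} w j p k` is largest in
WSPT order: after symmetrization this compares, pair by pair, `w j p k` with `w k p j`, and the
WSPT order takes the larger one.
-/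

open Finset Function

section Scheduling

variable {J : Type*}

def NonOverlapping (p S : J → ℕ) : Prop :=
  ∀ j k, j ≠ k → S j + p j ≤ S k ∨ S k + p k ≤ S j

theorem NonOverlapping.injective {p S : J → ℕ} (hS : NonOverlapping p S) (hp : ∀ j, 1 ≤ p j) :
    Injective S := by
  intro j k hjk
  by_contra hne
  rcases hS j k hne with h | h <;> grind

theorem NonOverlapping.add_sum_le {p S : J → ℕ} (hS : NonOverlapping p S) (F : Finset J)
    {a b : ℕ} (hab : a ≤ b) (ha : ∀ k ∈ F, a ≤ S k) (hb : ∀ k ∈ F, S k + p k ≤ b) :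
    a + ∑ k ∈ F, p k ≤ b := by
  classical
  have hdisj : (F : Set J).PairwiseDisjoint fun k => Ico (S k) (S k + p k) := by
    intro j _ k _ hjk
    rcases hS j k hjk with h | h <;>
      exact disjoint_left.2 fun t ht ht' => by simp only [mem_Ico] at ht ht'; omega
  have hsub : F.biUnion (fun k => Ico (S k) (S k + p k)) ⊆ Ico a b := by
    intro t ht
    obtain ⟨k, hk, hkt⟩ := mem_biUnion.1 ht
    simp only [mem_Ico] at hkt ⊢
    exact ⟨(ha k hk).trans hkt.1, hkt.2.trans_le (hb k hk)⟩
  have := card_le_card hsub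
  simp only [card_biUnion hdisj, Nat.card_Ico, add_tsub_cancel_left] at this
  omega

def workAfter [Fintype J] {α : Type*} [LinearOrder α] (p : J → ℕ) (X : J → α) (j : J) : ℕ :=
  ∑ k ∈ univ.filter (fun k => X j < X k), p k

theorem NonOverlapping.add_add_workAfter_le [Fintype J] {p S : J → ℕ} (hS : NonOverlapping p S)
    {M : ℕ} (hM : ∀ j, S j + p j ≤ M) (j : J) : S j + p j + workAfter p S j ≤ M := by
  refine hS.add_sum_le _ (hM j) (fun k hk => ?_) (fun k _ => hM k)
  have hlt : S j < S k := (mem_filter.1 hk).2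
  rcases hS j k (by rintro rfl; exact hlt.false) with h | h <;> omega

theorem NonOverlapping.add_sum_univ_le [Fintype J] [Nonempty J] {p S : J → ℕ}
    (hS : NonOverlapping p S) {T0 M : ℕ} (hT0 : ∀ j, T0 ≤ S j) (hM : ∀ j, S j + p j ≤ M) :
    T0 + ∑ j, p j ≤ M := by
  obtain ⟨j⟩ := ‹Nonempty J›
  exact hS.add_sum_le univ ((hT0 j).trans ((Nat.le_add_right _ _).trans (hM j)))
    (fun k _ => hT0 k) (fun k _ => hM k)

section WeightedStarts

variable [Fintype J] (w : J → ℚ) {p X t : J → ℕ}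

theorem sub_sub_le_sum_mul_of_add_add_le (hw : ∀ j, w j ≤ 0) {M : ℕ}
    (h : ∀ j, X j + p j + t j ≤ M) :
    (∑ j, w j) * M - ∑ j, w j * p j - ∑ j, w j * t j ≤ ∑ j, w j * X j := by
  rw [sum_mul, ← sum_sub_distrib, ← sum_sub_distrib]
  refine sum_le_sum fun j _ => ?_
  have hj : ((X j + p j + t j : ℕ) : ℚ) ≤ M := by exact_mod_cast h j
  push_cast at hj
  nlinarith [hw j]

theorem sum_mul_eq_of_add_add_eq {C : ℕ} (h : ∀ j, X j + p j + t j = C) :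
    ∑ j, w j * X j = (∑ j, w j) * C - ∑ j, w j * p j - ∑ j, w j * t j := by
  rw [sum_mul, ← sum_sub_distrib, ← sum_sub_distrib]
  refine sum_congr rfl fun j _ => ?_
  have hj : ((X j + p j + t j : ℕ) : ℚ) = C := by exact_mod_cast h j
  push_cast at hj
  rw [← hj]
  ring

end WeightedStarts

theorem sum_sum_le_of_add_swap_le [Fintype J] {f g : J → J → ℚ}
    (h : ∀ j k, f j k + f k j ≤ g j k + g k j) : ∑ j, ∑ k, f j k ≤ ∑ j, ∑ k, g j k := by
  have hsym : ∀ F : J → J → ℚ, ∑ j, ∑ k, (F j k + F k j) = 2 * ∑ j, ∑ k, F j k := fun F => by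
    simp only [sum_add_distrib]
    rw [sum_comm (f := fun j k => F k j)]
    ring
  have := sum_le_sum fun j (_ : j ∈ univ) => sum_le_sum fun k (_ : k ∈ univ) => h j k
  linarith [hsym f, hsym g]

section Exchange

variable [Fintype J] {α β : Type*} [LinearOrder α] [LinearOrder β] (w : J → ℚ) (p : J → ℕ)

theorem sum_mul_workAfter (X : J → α) :
    ∑ j, w j * (workAfter p X j : ℚ) = ∑ j, ∑ k, if X j < X k then w j * p k else 0 := by
  refine sum_congr rfl fun j _ => ?_
  rw [workAfter, Nat.cast_sum, mul_sum, sum_filter]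

theorem sum_mul_workAfter_le {X : J → α} {Y : J → β} (hX : Injective X) (hY : Injective Y)
    (hwspt : ∀ j k, Y j < Y k → w k * p j ≤ w j * p k) :
    ∑ j, w j * (workAfter p X j : ℚ) ≤ ∑ j, w j * (workAfter p Y j : ℚ) := by
  rw [sum_mul_workAfter, sum_mul_workAfter]
  refine sum_sum_le_of_add_swap_le fun j k => ?_
  rcases eq_or_ne j k with rfl | hjk
  · simp
  rcases (hX.ne hjk).lt_or_gt with hx | hx <;> rcases (hY.ne hjk).lt_or_gt with hy | hy <;>
    simp [hx, hx.not_gt, hy, hy.not_gt, hwspt _ _ hy]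

end Exchange

section Contiguous

variable [Fintype J] {α : Type*} [LinearOrder α] (T0 : ℕ) (p : J → ℕ) {r : J → α}

def contiguousSchedule (r : J → α) (j : J) : ℕ :=
  T0 + ∑ k ∈ univ.filter (fun k => r k < r j), p k

theorem contiguousSchedule_add_le {j k : J} (hjk : r j < r k) :
    contiguousSchedule T0 p r j + p j ≤ contiguousSchedule T0 p r k := by
  classical
  have hsub : insert j (univ.filter fun i => r i < r j) ⊆ univ.filter fun i => r i < r k := by
    intro i hi
    rcases mem_insert.1 hi with rfl | hi
    · exact mem_filter.2 ⟨mem_univ _, hjk⟩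
    · exact mem_filter.2 ⟨mem_univ _, (mem_filter.1 hi).2.trans hjk⟩
  have := sum_le_sum_of_subset hsub (f := p)
  rw [sum_insert (by simp)] at this
  rw [contiguousSchedule, contiguousSchedule]
  omega

theorem nonOverlapping_contiguousSchedule (hr : Injective r) :
    NonOverlapping p (contiguousSchedule T0 p r) := fun _ _ hjk =>
  (hr.ne hjk).lt_or_gt.imp (contiguousSchedule_add_le T0 p) (contiguousSchedule_add_le T0 p)

theorem contiguousSchedule_add_add_workAfter (hr : Injective r) (j : J) :
    contiguousSchedule T0 p r j + p j + workAfter p r j = T0 + ∑ k, p k := by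
  classical
  have hsplit : univ.filter (fun k => ¬ r k < r j) = insert j (univ.filter fun k => r j < r k) := by
    ext k
    simp only [mem_filter, mem_univ, true_and, mem_insert, not_lt, ← hr.eq_iff (a := k)]
    exact le_iff_eq_or_lt.trans (or_congr eq_comm Iff.rfl)
  rw [← sum_filter_add_sum_filter_not univ (fun k => r k < r j), hsplit,
    sum_insert (by simp), contiguousSchedule, workAfter]
  ring

end Contiguous

section WSPTOrder

variable {n : ℕ} (e : Fin n ≃ J) (p : J → ℕ)

theorem eq_contiguousSchedule_of_succ [Fintype J] {X : J → ℕ} {T0 : ℕ} (hn : 0 < n)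
    (h0 : X (e ⟨0, hn⟩) = T0)
    (hstep : ∀ i : ℕ, ∀ h : i + 1 < n,
      X (e ⟨i + 1, h⟩) = X (e ⟨i, Nat.lt_of_succ_lt h⟩) + p (e ⟨i, Nat.lt_of_succ_lt h⟩)) :
    X = contiguousSchedule T0 p e.symm := by
  obtain ⟨m, rfl⟩ : ∃ m, n = m + 1 := ⟨n - 1, by omega⟩
  funext j
  suffices ∀ i, X (e i) = T0 + ∑ k ∈ univ.filter (fun k => e.symm k < i), p k by
    simpa [contiguousSchedule] using this (e.symm j)
  intro i
  induction i using Fin.induction with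
  | zero => simpa using h0
  | succ i ih =>
    classical
    have hfilter : univ.filter (fun k => e.symm k < i.succ)
        = insert (e i.castSucc) (univ.filter fun k => e.symm k < i.castSucc) := by
      ext k
      simp only [mem_filter, mem_univ, true_and, mem_insert, ← e.symm_apply_eq, Fin.ext_iff,
        Fin.lt_def, Fin.val_succ, Fin.val_castSucc]
      omega
    have hsucc : X (e i.succ) = X (e i.castSucc) + p (e i.castSucc) := hstep i (by omega)
    rw [hfilter, sum_insert (by simp), hsucc, ih]
    ring

theorem cross_mul_le_of_symm_lt (w : J → ℚ) (hp : ∀ j, 1 ≤ p j)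
    (hord : ∀ i : ℕ, ∀ h : i + 1 < n,
      w (e ⟨i + 1, h⟩) / (p (e ⟨i + 1, h⟩) : ℚ)
        ≤ w (e ⟨i, Nat.lt_of_succ_lt h⟩) / (p (e ⟨i, Nat.lt_of_succ_lt h⟩) : ℚ))
    {j k : J} (hjk : e.symm j < e.symm k) : w k * p j ≤ w j * p k := by
  obtain ⟨m, rfl⟩ : ∃ m, n = m + 1 := ⟨n - 1, by have := (e.symm j).pos; omega⟩
  have hanti : Antitone fun i => w (e i) / (p (e i) : ℚ) :=
    Fin.antitone_iff_succ_le.2 fun i => hord i (by omega)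
  have := hanti hjk.le
  simp only [Equiv.apply_symm_apply] at this
  have hpos : ∀ i, (0 : ℚ) < p i := fun i => by exact_mod_cast hp i
  rwa [div_le_div_iff₀ (hpos k) (hpos j)] at this

end WSPTOrder

end Scheduling

theorem wspt_trd_part_two_early_general
    {J : Type*} [Fintype J] [Nonempty J]
    (p : J → ℕ) (w : J → ℚ) (T0 Tf : ℕ)
    (hp : ∀ j, 1 ≤ p j)
    (hw : ∀ j, w j ≤ 0) (hsum : -1 ≤ ∑ j, w j)
    (e : Fin (Fintype.card J) ≃ J)
    (hord : ∀ i : ℕ, ∀ h : i + 1 < Fintype.card J,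
      w (e ⟨i + 1, h⟩) / (p (e ⟨i + 1, h⟩) : ℚ)
        ≤ w (e ⟨i, Nat.lt_of_succ_lt h⟩) / (p (e ⟨i, Nat.lt_of_succ_lt h⟩) : ℚ))
    (SW : J → ℕ)
    (hSW0 : SW (e ⟨0, Fintype.card_pos⟩) = T0)
    (hSWstep : ∀ i : ℕ, ∀ h : i + 1 < Fintype.card J,
      SW (e ⟨i + 1, h⟩)
        = SW (e ⟨i, Nat.lt_of_succ_lt h⟩) + p (e ⟨i, Nat.lt_of_succ_lt h⟩)) :
    ∀ S : J → ℕ,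
      (∀ j, T0 ≤ S j) → (∀ j, S j + p j ≤ Tf) →
      (∀ j k, j ≠ k → S j + p j ≤ S k ∨ S k + p k ≤ S j) →
      ((univ.sup' univ_nonempty (fun j => SW j + p j) : ℕ) : ℚ)
          + ∑ j, w j * (SW j : ℚ)
        ≤ ((univ.sup' univ_nonempty (fun j => S j + p j) : ℕ) : ℚ)
          + ∑ j, w j * (S j : ℚ) := by
  intro S hS0 _ hS
  replace hS : NonOverlapping p S := hS
  have hSW := eq_contiguousSchedule_of_succ e p Fintype.card_pos hSW0 hSWstep
  have hSWstart : ∀ j, T0 ≤ SW j := by simp [hSW, contiguousSchedule]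
  have hSWdisj : NonOverlapping p SW := hSW ▸ nonOverlapping_contiguousSchedule T0 p e.symm.injective
  have hSWtight : ∀ j, SW j + p j + workAfter p e.symm j = T0 + ∑ k, p k :=
    hSW ▸ contiguousSchedule_add_add_workAfter T0 p e.symm.injective
  set M := univ.sup' univ_nonempty (fun j => S j + p j)
  have hM : ∀ j, S j + p j ≤ M := fun j => le_sup' (fun j => S j + p j) (mem_univ j)
  have hMW : univ.sup' univ_nonempty (fun j => SW j + p j) = T0 + ∑ j, p j := by
    refine le_antisymm (sup'_le _ _ fun j _ => ?_) ?_
    · have := hSWtight j; omega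
    · exact hSWdisj.add_sum_univ_le hSWstart fun j => le_sup' (fun j => SW j + p j) (mem_univ j)
  have hTM : ((T0 + ∑ j, p j : ℕ) : ℚ) ≤ M := by exact_mod_cast hS.add_sum_univ_le hS0 hM
  have hscale := mul_le_mul_of_nonneg_left hTM (show (0 : ℚ) ≤ 1 + ∑ j, w j by linarith)
  have hexchange := sum_mul_workAfter_le w p (hS.injective hp) e.symm.injective
    fun _ _ => cross_mul_le_of_symm_lt e p w hp hord
  have hobjS := sub_sub_le_sum_mul_of_add_add_le w hw (hS.add_add_workAfter_le hM)
  rw [hMW, sum_mul_eq_of_add_add_eq w hSWtight]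
  linarith

/-- WSPT-TRD optimality, Part II (early case): with nonpositive weights summing to at least -1, the early WSPT schedule
minimizes `obj(S) = Cmax(S) + ∑ j, w j * S j` over all feasible schedules. -/
theorem wspt_trd_part_two_early
    {J : Type*} [Fintype J] [Nonempty J]
    (p : J → ℕ) (w : J → ℚ) (T0 Tf : ℕ)
    (hp : ∀ j, 1 ≤ p j) (hT : T0 + ∑ j, p j ≤ Tf)
    (hw : ∀ j, w j ≤ 0) (hsum : -1 ≤ ∑ j, w j)
    (e : Fin (Fintype.card J) ≃ J)
    (hord : ∀ i : ℕ, ∀ h : i + 1 < Fintype.card J,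
      w (e ⟨i + 1, h⟩) / (p (e ⟨i + 1, h⟩) : ℚ)
        ≤ w (e ⟨i, Nat.lt_of_succ_lt h⟩) / (p (e ⟨i, Nat.lt_of_succ_lt h⟩) : ℚ))
    (SW : J → ℕ)
    (hSW0 : SW (e ⟨0, Fintype.card_pos⟩) = T0)
    (hSWstep : ∀ i : ℕ, ∀ h : i + 1 < Fintype.card J,
      SW (e ⟨i + 1, h⟩)
        = SW (e ⟨i, Nat.lt_of_succ_lt h⟩) + p (e ⟨i, Nat.lt_of_succ_lt h⟩)) :
    ∀ S : J → ℕ,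
      (∀ j, T0 ≤ S j) → (∀ j, S j + p j ≤ Tf) →
      (∀ j k, j ≠ k → S j + p j ≤ S k ∨ S k + p k ≤ S j) →
      ((univ.sup' univ_nonempty (fun j => SW j + p j) : ℕ) : ℚ)
          + ∑ j, w j * (SW j : ℚ)
        ≤ ((univ.sup' univ_nonempty (fun j => S j + p j) : ℕ) : ℚ)
          + ∑ j, w j * (S j : ℚ) :=
  wspt_trd_part_two_early_general p w T0 Tf hp hw hsum e hord SW hSW0 hSWstep
end

section
/- (WSPT-TRD optimality, Part II, late case.) Suppose all weights are nonpositive (w j ≤ 0 for every j ∈ J) and the sum of the weights satisfies ∑_{j∈J} w j ≤ −1. Then the late WSPT schedule minimizes obj over all feasible single-machine schedules: obj(S_late) ≤ obj(S) for every feasible schedule S, where S_late denotes the late WSPT schedule. -/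
open Finset

private lemma wspt_perm_double_sum_le {n : ℕ} (v Q : Fin n → ℚ)
    (hcross : ∀ i j : Fin n, i ≤ j → v i * Q j ≤ v j * Q i)
    (g : Equiv.Perm (Fin n)) :
    (∑ i, ∑ j, if i ≤ j then v i * Q j else 0)
      ≤ ∑ k, ∑ l, if l ≤ k then v (g k) * Q (g l) else 0 := by
  have inner : ∀ k : Fin n, (∑ l, if l ≤ k then v (g k) * Q (g l) else 0)
      = ∑ j, if g.symm j ≤ g.symm (g k) then v (g k) * Q j else 0 :=
    fun k => Fintype.sum_equiv g _ _ (fun l => by simp)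
  have hR : (∑ k, ∑ l, if l ≤ k then v (g k) * Q (g l) else 0)
      = ∑ i, ∑ j, if g.symm j ≤ g.symm i then v i * Q j else 0 := by
    calc ∑ k, ∑ l, (if l ≤ k then v (g k) * Q (g l) else 0)
        = ∑ k, ∑ j, (if g.symm j ≤ g.symm (g k) then v (g k) * Q j else 0) :=
          Finset.sum_congr rfl (fun k _ => inner k)
      _ = ∑ i, ∑ j, (if g.symm j ≤ g.symm i then v i * Q j else 0) :=
          Fintype.sum_equiv g _ _ (fun k => rfl)
  rw [hR]
  have key : ∀ i j : Fin n,
      0 ≤ ((if g.symm j ≤ g.symm i then v i * Q j else 0) - (if i ≤ j then v i * Q j else 0))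
        + ((if g.symm i ≤ g.symm j then v j * Q i else 0) - (if j ≤ i then v j * Q i else 0)) := by
    intro i j
    rcases lt_trichotomy i j with hlt | heq | hlt
    · have hij : i ≤ j := le_of_lt hlt
      have hji : ¬ j ≤ i := not_le.mpr hlt
      have hne : g.symm j ≠ g.symm i := fun hc => (ne_of_lt hlt) (g.symm.injective hc).symm
      rcases le_or_gt (g.symm j) (g.symm i) with hτ | hτ
      · rw [if_pos hτ, if_pos hij, if_neg (fun hc => hne (le_antisymm hτ hc)), if_neg hji]
        linarith
      · rw [if_neg (not_le.mpr hτ), if_pos hij, if_pos hτ.le, if_neg hji]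
        have := hcross i j hij
        linarith
    · subst heq; simp
    · have hij : ¬ i ≤ j := not_le.mpr hlt
      have hji : j ≤ i := le_of_lt hlt
      have hne : g.symm i ≠ g.symm j := fun hc => (ne_of_lt hlt) (g.symm.injective hc).symm
      rcases le_or_gt (g.symm i) (g.symm j) with hτ | hτ
      · rw [if_neg (fun hc => hne (le_antisymm hτ hc)), if_neg hij, if_pos hτ, if_pos hji]
        linarith
      · rw [if_pos hτ.le, if_neg hij, if_neg (not_le.mpr hτ), if_pos hji]
        have := hcross j i hji
        linarith
  have hsum0 : 0 ≤ ∑ i, ∑ j,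
      (((if g.symm j ≤ g.symm i then v i * Q j else 0) - (if i ≤ j then v i * Q j else 0))
        + ((if g.symm i ≤ g.symm j then v j * Q i else 0) - (if j ≤ i then v j * Q i else 0))) :=
    Finset.sum_nonneg fun i _ => Finset.sum_nonneg fun j _ => key i j
  have hc1 : (∑ i, ∑ j, if g.symm i ≤ g.symm j then v j * Q i else 0)
      = ∑ i, ∑ j, if g.symm j ≤ g.symm i then v i * Q j else 0 := Finset.sum_comm
  have hc2 : (∑ i, ∑ j, if j ≤ i then v j * Q i else 0)
      = ∑ i, ∑ j, if i ≤ j then v i * Q j else 0 := Finset.sum_comm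
  simp only [Finset.sum_add_distrib, Finset.sum_sub_distrib] at hsum0
  linarith

/-- WSPT-TRD optimality, Part II (late case): with nonpositive weights summing to
at most -1, the late WSPT schedule (allocated contiguously ending at `Tf`)
minimizes `obj(S) = Cmax(S) + ∑ j, w j * S j` over all feasible schedules. -/
theorem wspt_trd_part_two_late
    {J : Type*} [Fintype J] [Nonempty J]
    (p : J → ℕ) (w : J → ℚ) (T0 Tf : ℕ)
    (hp : ∀ j, 1 ≤ p j) (hT : T0 + ∑ j, p j ≤ Tf)
    (hw : ∀ j, w j ≤ 0) (hsum : ∑ j, w j ≤ -1)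
    (e : Fin (Fintype.card J) ≃ J)
    (hord : ∀ i : ℕ, ∀ h : i + 1 < Fintype.card J,
      w (e ⟨i + 1, h⟩) / (p (e ⟨i + 1, h⟩) : ℚ)
        ≤ w (e ⟨i, Nat.lt_of_succ_lt h⟩) / (p (e ⟨i, Nat.lt_of_succ_lt h⟩) : ℚ))
    (SL : J → ℕ)
    (hSLlast : SL (e ⟨Fintype.card J - 1, Nat.sub_lt Fintype.card_pos Nat.one_pos⟩)
        + p (e ⟨Fintype.card J - 1, Nat.sub_lt Fintype.card_pos Nat.one_pos⟩) = Tf)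
    (hSLstep : ∀ i : ℕ, ∀ h : i + 1 < Fintype.card J,
      SL (e ⟨i + 1, h⟩)
        = SL (e ⟨i, Nat.lt_of_succ_lt h⟩) + p (e ⟨i, Nat.lt_of_succ_lt h⟩)) :
    ∀ S : J → ℕ,
      (∀ j, T0 ≤ S j) → (∀ j, S j + p j ≤ Tf) →
      (∀ j k, j ≠ k → S j + p j ≤ S k ∨ S k + p k ≤ S j) →
      ((univ.sup' univ_nonempty (fun j => SL j + p j) : ℕ) : ℚ)
          + ∑ j, w j * (SL j : ℚ)
        ≤ ((univ.sup' univ_nonempty (fun j => S j + p j) : ℕ) : ℚ)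
          + ∑ j, w j * (S j : ℚ) := by
  intro S hT0S hSTf hnol
  -- ratio monotonicity along e
  have hAnti : ∀ i j : Fin (Fintype.card J), i ≤ j →
      w (e j) / (p (e j) : ℚ) ≤ w (e i) / (p (e i) : ℚ) := by
    have key : ∀ k : ℕ, ∀ i j : Fin (Fintype.card J), (j : ℕ) = (i : ℕ) + k →
        w (e j) / (p (e j) : ℚ) ≤ w (e i) / (p (e i) : ℚ) := by
      intro k
      induction k with
      | zero =>
        intro i j hij
        have : i = j := Fin.ext (by omega)
        rw [this]
      | succ k ih =>
        intro i j hij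
        have hlt : (i : ℕ) + k + 1 < Fintype.card J := by have := j.isLt; omega
        have hm : (i : ℕ) + k < Fintype.card J := Nat.lt_of_succ_lt hlt
        have hj : j = ⟨(i : ℕ) + k + 1, hlt⟩ :=
          Fin.ext (show (j : ℕ) = (i : ℕ) + k + 1 by omega)
        have h1 := hord ((i : ℕ) + k) hlt
        have h2 := ih i ⟨(i : ℕ) + k, hm⟩ rfl
        rw [hj]
        exact le_trans h1 h2
    intro i j hij
    exact key ((j : ℕ) - (i : ℕ)) i j (by omega)
  have hcross : ∀ i j : Fin (Fintype.card J), i ≤ j →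
      (-(w (e i))) * ((p (e j) : ℚ)) ≤ (-(w (e j))) * ((p (e i) : ℚ)) := by
    intro i j hij
    have h1 := hAnti i j hij
    have hpi : (0:ℚ) < (p (e i) : ℚ) := Nat.cast_pos.mpr (hp (e i))
    have hpj : (0:ℚ) < (p (e j) : ℚ) := Nat.cast_pos.mpr (hp (e j))
    rw [div_le_div_iff₀ hpj hpi] at h1
    linarith
  -- SL suffix identity
  have hSLid : ∀ i : Fin (Fintype.card J),
      SL (e i) + (∑ j ∈ univ.filter (fun j => i ≤ j), p (e j)) = Tf := by
    have main : ∀ d : ℕ, ∀ i : Fin (Fintype.card J), Fintype.card J - 1 - (i : ℕ) = d →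
        SL (e i) + (∑ j ∈ univ.filter (fun j => i ≤ j), p (e j)) = Tf := by
      intro d
      induction d with
      | zero =>
        intro i hi
        have hival : (i : ℕ) = Fintype.card J - 1 := by have := i.isLt; omega
        have hfilter : univ.filter (fun j => i ≤ j) = {i} := by
          ext l
          simp only [Finset.mem_filter, Finset.mem_univ, true_and, Finset.mem_singleton,
            Fin.le_def, Fin.ext_iff]
          have := l.isLt
          omega
        rw [hfilter, Finset.sum_singleton]
        have hieq : i = (⟨Fintype.card J - 1, Nat.sub_lt Fintype.card_pos Nat.one_pos⟩ :
            Fin (Fintype.card J)) := Fin.ext hival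
        rw [hieq]
        exact hSLlast
      | succ d ih =>
        intro i hi
        have hlt : (i : ℕ) + 1 < Fintype.card J := by have := i.isLt; omega
        have hstep : SL (e ⟨(i:ℕ)+1, hlt⟩) = SL (e i) + p (e i) := hSLstep (i:ℕ) hlt
        have hrec := ih ⟨(i:ℕ)+1, hlt⟩
          (show Fintype.card J - 1 - ((i:ℕ)+1) = d by omega)
        have hsplit : univ.filter (fun j => i ≤ j)
            = insert i (univ.filter (fun j => (⟨(i:ℕ)+1, hlt⟩ : Fin (Fintype.card J)) ≤ j)) := by
          ext l
          simp only [Finset.mem_filter, Finset.mem_univ, true_and, Finset.mem_insert,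
            Fin.le_def, Fin.ext_iff]
          omega
        have hnm : i ∉ univ.filter (fun j => (⟨(i:ℕ)+1, hlt⟩ : Fin (Fintype.card J)) ≤ j) := by
          simp only [Finset.mem_filter, Finset.mem_univ, true_and, Fin.le_def]
          omega
        rw [hsplit, Finset.sum_insert hnm]
        omega
    intro i
    exact main (Fintype.card J - 1 - (i : ℕ)) i rfl
  have hSLub : ∀ i : Fin (Fintype.card J), SL (e i) + p (e i) ≤ Tf := by
    intro i
    have h1 := hSLid i
    have h2 : p (e i) ≤ ∑ j ∈ univ.filter (fun j => i ≤ j), p (e j) :=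
      Finset.single_le_sum (f := fun j => p (e j)) (fun j _ => Nat.zero_le _) (by simp)
    omega
  have hCmaxSL : (univ.sup' univ_nonempty (fun j => SL j + p j)) = Tf := by
    apply le_antisymm
    · apply Finset.sup'_le
      intro j _
      have := hSLub (e.symm j)
      simpa using this
    · rw [← hSLlast]
      exact Finset.le_sup' (fun j => SL j + p j) (Finset.mem_univ _)
  -- Cmax of S
  obtain ⟨M, hMle, hjM, hMgoal⟩ : ∃ M : ℕ, M ≤ Tf ∧ (∀ j, S j + p j ≤ M) ∧
      (univ.sup' univ_nonempty (fun j => S j + p j)) = M :=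
    ⟨_, Finset.sup'_le _ _ fun j _ => hSTf j,
      fun j => Finset.le_sup' (fun j => S j + p j) (Finset.mem_univ j), rfl⟩
  -- reversed start times D
  obtain ⟨D, hDdef⟩ : ∃ D : J → ℕ, ∀ j, S j + D j = Tf :=
    ⟨fun j => Tf - S j, fun j => by
      have h1 := hSTf j; have h2 := hp j
      show S j + (Tf - S j) = Tf
      omega⟩
  have hdisj : ∀ j k, j ≠ k → D k + p j ≤ D j ∨ D j + p k ≤ D k := by
    intro j k hjk
    have h1 := hDdef j
    have h2 := hDdef k
    rcases hnol j k hjk with h | h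
    · left; omega
    · right; omega
  have hdelta : ∀ j, p j + (Tf - M) ≤ D j := by
    intro j
    have h1 := hjM j
    have h2 := hDdef j
    omega
  have hDinj : Function.Injective (fun i : Fin (Fintype.card J) => D (e i)) := by
    intro a b hab
    by_contra hne
    have hne' : e a ≠ e b := fun hc => hne (e.injective hc)
    have hab' : D (e a) = D (e b) := hab
    have h1 := hp (e a)
    have h2 := hp (e b)
    rcases hdisj (e a) (e b) hne' with h | h <;> omega
  -- sorting permutation
  obtain ⟨g, hmono⟩ : ∃ g : Equiv.Perm (Fin (Fintype.card J)),
      StrictMono ((fun i : Fin (Fintype.card J) => D (e i)) ∘ g) :=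
    ⟨Tuple.sort (fun i => D (e i)),
      (Tuple.monotone_sort _).strictMono_of_injective
        (hDinj.comp (Tuple.sort (fun i => D (e i))).injective)⟩
  -- chain inequality
  have hchain : ∀ m : ℕ, ∀ hm : m < Fintype.card J,
      (Tf - M) + (∑ l ∈ univ.filter (fun l => l ≤ (⟨m, hm⟩ : Fin (Fintype.card J))),
          p (e (g l)))
        ≤ D (e (g ⟨m, hm⟩)) := by
    intro m
    induction m with
    | zero =>
      intro hm
      have hfilter : univ.filter (fun l => l ≤ (⟨0, hm⟩ : Fin (Fintype.card J)))
          = {(⟨0, hm⟩ : Fin (Fintype.card J))} := by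
        ext l
        simp only [Finset.mem_filter, Finset.mem_univ, true_and, Finset.mem_singleton,
          Fin.le_def, Fin.ext_iff]
        omega
      rw [hfilter, Finset.sum_singleton]
      have := hdelta (e (g ⟨0, hm⟩))
      omega
    | succ m ih =>
      intro hm
      have hm' : m < Fintype.card J := Nat.lt_of_succ_lt hm
      have hlt : D (e (g ⟨m, hm'⟩)) < D (e (g ⟨m+1, hm⟩)) :=
        hmono (Fin.mk_lt_mk.mpr (Nat.lt_succ_self m))
      have hne' : e (g ⟨m+1, hm⟩) ≠ e (g ⟨m, hm'⟩) := by
        intro hc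
        have h1 : (⟨m+1, hm⟩ : Fin (Fintype.card J)) = ⟨m, hm'⟩ := g.injective (e.injective hc)
        have h2 := congrArg Fin.val h1
        simp at h2
      have hd : D (e (g ⟨m, hm'⟩)) + p (e (g ⟨m+1, hm⟩)) ≤ D (e (g ⟨m+1, hm⟩)) := by
        rcases hdisj (e (g ⟨m+1, hm⟩)) (e (g ⟨m, hm'⟩)) hne' with h | h
        · exact h
        · have := hp (e (g ⟨m, hm'⟩)); omega
      have hsplit : univ.filter (fun l => l ≤ (⟨m+1, hm⟩ : Fin (Fintype.card J)))
          = insert (⟨m+1, hm⟩ : Fin (Fintype.card J))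
              (univ.filter (fun l => l ≤ (⟨m, hm'⟩ : Fin (Fintype.card J)))) := by
        ext l
        simp only [Finset.mem_filter, Finset.mem_univ, true_and, Finset.mem_insert,
          Fin.le_def, Fin.ext_iff]
        omega
      have hnm : (⟨m+1, hm⟩ : Fin (Fintype.card J))
          ∉ univ.filter (fun l => l ≤ (⟨m, hm'⟩ : Fin (Fintype.card J))) := by
        simp only [Finset.mem_filter, Finset.mem_univ, true_and, Fin.le_def]
        omega
      rw [hsplit, Finset.sum_insert hnm]
      have hih := ih hm'
      omega
  -- casts to ℚ
  have hδcast : (M : ℚ) + ((Tf - M : ℕ) : ℚ) = (Tf : ℚ) := by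
    have h : M + (Tf - M) = Tf := by omega
    exact_mod_cast h
  have hδ0 : (0:ℚ) ≤ ((Tf - M : ℕ) : ℚ) := Nat.cast_nonneg _
  have hcastSL : ∀ i : Fin (Fintype.card J), (SL (e i) : ℚ)
      = (Tf : ℚ) - ∑ j ∈ univ.filter (fun j => i ≤ j), (p (e j) : ℚ) := by
    intro i
    have h := hSLid i
    have h2 : (SL (e i) : ℚ) + ∑ j ∈ univ.filter (fun j => i ≤ j), (p (e j) : ℚ)
        = (Tf : ℚ) := by exact_mod_cast h
    linarith
  have hcastS : ∀ j : J, (S j : ℚ) = (Tf : ℚ) - (D j : ℚ) := by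
    intro j
    have h2 : (S j : ℚ) + (D j : ℚ) = (Tf : ℚ) := by exact_mod_cast hDdef j
    linarith
  have hchainQ : ∀ k : Fin (Fintype.card J), ((Tf - M : ℕ) : ℚ)
      + ∑ l ∈ univ.filter (fun l => l ≤ k), (p (e (g l)) : ℚ) ≤ (D (e (g k)) : ℚ) := by
    intro k
    have h : (Tf - M) + ∑ l ∈ univ.filter (fun l => l ≤ k), p (e (g l)) ≤ D (e (g k)) :=
      hchain k.1 k.2
    exact_mod_cast h
  have hVge : (1:ℚ) ≤ ∑ i, -(w (e i)) := by
    have h1 : ∑ i : Fin (Fintype.card J), -(w (e i))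
        = -∑ i : Fin (Fintype.card J), w (e i) := by simp
    have h2 : ∑ i : Fin (Fintype.card J), w (e i) = ∑ j, w j :=
      Fintype.sum_equiv e _ _ (fun i => rfl)
    rw [h1, h2]; linarith
  have hstep3 : ∑ k, (-(w (e (g k))))
        * (((Tf - M : ℕ):ℚ) + ∑ l ∈ univ.filter (fun l => l ≤ k), (p (e (g l)) : ℚ))
      ≤ ∑ k, (-(w (e (g k)))) * ((D (e (g k))) : ℚ) := by
    refine Finset.sum_le_sum fun k _ => ?_
    exact mul_le_mul_of_nonneg_left (hchainQ k) (by have := hw (e (g k)); linarith)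
  have hstep4 : ∑ k, (-(w (e (g k))))
        * (((Tf - M : ℕ):ℚ) + ∑ l ∈ univ.filter (fun l => l ≤ k), (p (e (g l)) : ℚ))
      = ((Tf - M : ℕ):ℚ) * (∑ k, -(w (e (g k))))
        + ∑ k, (-(w (e (g k)))) * (∑ l ∈ univ.filter (fun l => l ≤ k), (p (e (g l)) : ℚ)) := by
    rw [Finset.mul_sum, ← Finset.sum_add_distrib]
    exact Finset.sum_congr rfl fun k _ => by ring
  have hBg : ∑ k, (-(w (e (g k)))) * ((D (e (g k))) : ℚ)
      = ∑ i, (-(w (e i))) * ((D (e i)) : ℚ) :=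
    Fintype.sum_equiv g _ _ (fun k => rfl)
  have hVg : ∑ k, -(w (e (g k))) = ∑ i, -(w (e i)) :=
    Fintype.sum_equiv g _ _ (fun k => rfl)
  have hperm := wspt_perm_double_sum_le (fun i => -(w (e i))) (fun i => (p (e i) : ℚ)) hcross g
  have hL : (∑ i, ∑ j, if i ≤ j then (-(w (e i))) * ((p (e j):ℚ)) else 0)
      = ∑ i, (-(w (e i))) * (∑ j ∈ univ.filter (fun j => i ≤ j), (p (e j) : ℚ)) := by
    simp only [Finset.sum_filter, Finset.mul_sum, mul_ite, mul_zero]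
  have hRR : (∑ k, ∑ l, if l ≤ k then (-(w (e (g k)))) * ((p (e (g l)):ℚ)) else 0)
      = ∑ k, (-(w (e (g k)))) * (∑ l ∈ univ.filter (fun l => l ≤ k), (p (e (g l)) : ℚ)) := by
    simp only [Finset.sum_filter, Finset.mul_sum, mul_ite, mul_zero]
  rw [hL, hRR] at hperm
  have hδV : ((Tf - M : ℕ):ℚ) ≤ ((Tf - M : ℕ):ℚ) * (∑ i, -(w (e i))) :=
    le_mul_of_one_le_right hδ0 hVge
  have hδVg : ((Tf - M : ℕ):ℚ) * (∑ k, -(w (e (g k))))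
      = ((Tf - M : ℕ):ℚ) * (∑ i, -(w (e i))) := by rw [hVg]
  have hE1 : ∑ i, w (e i) * (SL (e i) : ℚ)
      = (∑ i, w (e i) * (Tf : ℚ))
        + ∑ i, (-(w (e i))) * (∑ j ∈ univ.filter (fun j => i ≤ j), (p (e j) : ℚ)) := by
    rw [← Finset.sum_add_distrib]
    refine Finset.sum_congr rfl fun i _ => ?_
    rw [hcastSL i]; ring
  have hE2 : ∑ i, w (e i) * (S (e i) : ℚ)
      = (∑ i, w (e i) * (Tf : ℚ)) + ∑ i, (-(w (e i))) * ((D (e i)) : ℚ) := by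
    rw [← Finset.sum_add_distrib]
    refine Finset.sum_congr rfl fun i _ => ?_
    rw [hcastS (e i)]; ring
  have hre1 : ∑ j, w j * (SL j : ℚ) = ∑ i, w (e i) * (SL (e i) : ℚ) :=
    (Fintype.sum_equiv e _ _ (fun i => rfl)).symm
  have hre2 : ∑ j, w j * (S j : ℚ) = ∑ i, w (e i) * (S (e i) : ℚ) :=
    (Fintype.sum_equiv e _ _ (fun i => rfl)).symm
  rw [hCmaxSL, hMgoal, hre1, hre2, hE1, hE2]
  linarith [hstep3, hstep4, hBg, hVg, hperm, hδV, hδVg, hδcast]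
end

section
/- (Lower bound LB1.) For every feasible schedule (σ1, σ2) of a two-machine cross-docking instance, the makespan satisfies Cmax(σ1, σ2) ≥ ∑_{j∈J2} p2 j + min_{j∈J2} ∑_{i∈S_j} p1 i. -/
open Finset

/-- Sum of lengths of pairwise non-overlapping intervals contained in `[a,b]`
is at most `b - a`. -/
lemma interval_sum_le {α : Type*} [DecidableEq α] (f p : α → ℕ) (b : ℕ)
    (s : Finset α) (a : ℕ)
    (hp : ∀ x ∈ s, 1 ≤ p x)
    (hov : ∀ x ∈ s, ∀ y ∈ s, x ≠ y → f x + p x ≤ f y ∨ f y + p y ≤ f x)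
    (ha : ∀ x ∈ s, a ≤ f x) (hb : ∀ x ∈ s, f x + p x ≤ b) (hab : a ≤ b) :
    a + ∑ x ∈ s, p x ≤ b := by
  induction s using Finset.strongInduction generalizing a with
  | _ s ih =>
    rcases s.eq_empty_or_nonempty with rfl | hs
    · simpa using hab
    · obtain ⟨x, hx, hmin⟩ := s.exists_min_image f hs
      have key : ∀ y ∈ s.erase x, f x + p x ≤ f y := by
        intro y hy
        have hyx := Finset.ne_of_mem_erase hy
        have hys := Finset.mem_of_mem_erase hy
        rcases hov x hx y hys (fun h => hyx h.symm) with h | h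
        · exact h
        · have h1 := hmin y hys
          have h2 := hp y hys
          omega
      have hrec : (f x + p x) + ∑ y ∈ s.erase x, p y ≤ b := by
        refine ih (s.erase x) (Finset.erase_ssubset hx) (f x + p x)
          (fun y hy => hp y (Finset.mem_of_mem_erase hy))
          (fun y hy z hz hyz =>
            hov y (Finset.mem_of_mem_erase hy) z (Finset.mem_of_mem_erase hz) hyz)
          key
          (fun y hy => hb y (Finset.mem_of_mem_erase hy))
          (hb x hx)
      rw [← Finset.add_sum_erase s p hx]
      have hax := ha x hx
      omega

/-- Lower bound LB1: for every feasible two-machine cross-docking schedule, the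
makespan is at least `∑_{j∈J2} p2 j + min_{j∈J2} ∑_{i∈S_j} p1 i`. -/
theorem lower_bound_LB1
    {J1 J2 : Type*} [Fintype J1] [Fintype J2] [Nonempty J1] [Nonempty J2]
    (p1 : J1 → ℕ) (p2 : J2 → ℕ)
    (hp1 : ∀ i, 1 ≤ p1 i) (hp2 : ∀ j, 1 ≤ p2 j)
    (pred : J2 → Finset J1) (hpred : ∀ j, (pred j).Nonempty)
    (σ1 : J1 → ℕ) (σ2 : J2 → ℕ)
    (hov1 : ∀ i i', i ≠ i' → σ1 i + p1 i ≤ σ1 i' ∨ σ1 i' + p1 i' ≤ σ1 i)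
    (hov2 : ∀ j j', j ≠ j' → σ2 j + p2 j ≤ σ2 j' ∨ σ2 j' + p2 j' ≤ σ2 j)
    (hcd : ∀ j : J2, ∀ i ∈ pred j, σ1 i + p1 i ≤ σ2 j) :
    (∑ j, p2 j) + univ.inf' univ_nonempty (fun j : J2 => ∑ i ∈ pred j, p1 i)
      ≤ univ.sup' univ_nonempty (fun j : J2 => σ2 j + p2 j) := by
  classical
  -- `j0`: the outbound job with minimal start time
  obtain ⟨j0, hj0, hmin⟩ := (univ : Finset J2).exists_min_image σ2 univ_nonempty
  -- all predecessors of `j0` fit in `[0, σ2 j0]` on machine 1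
  have h1 : ∑ i ∈ pred j0, p1 i ≤ σ2 j0 := by
    have := interval_sum_le σ1 p1 (σ2 j0) (pred j0) 0
      (fun i _ => hp1 i)
      (fun i _ i' _ h => hov1 i i' h)
      (fun i _ => Nat.zero_le _)
      (fun i hi => hcd j0 i hi)
      (Nat.zero_le _)
    simpa using this
  -- all outbound jobs fit in `[σ2 j0, makespan]` on machine 2
  have h2 : σ2 j0 + ∑ j, p2 j ≤ univ.sup' univ_nonempty (fun j : J2 => σ2 j + p2 j) := by
    refine interval_sum_le σ2 p2 _ univ (σ2 j0)
      (fun j _ => hp2 j)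
      (fun j _ j' _ h => hov2 j j' h)
      (fun j hj => hmin j hj)
      (fun j _ => Finset.le_sup' (fun j : J2 => σ2 j + p2 j) (mem_univ j))
      ?_
    exact le_trans (Nat.le_add_right _ _) (Finset.le_sup' (fun j : J2 => σ2 j + p2 j) (mem_univ j0))
  have h3 : univ.inf' univ_nonempty (fun j : J2 => ∑ i ∈ pred j, p1 i) ≤ ∑ i ∈ pred j0, p1 i :=
    Finset.inf'_le _ (mem_univ j0)
  omega
end

section
/- (Lower bound LB2.) For i ∈ J1 let P_i = { j ∈ J2 : i ∈ S_j } be the set of successors of i, and assume every i ∈ J1 has at least one successor (P_i ≠ ∅). Then for every feasible schedule (σ1, σ2) of the two-machine cross-docking instance, the makespan satisfies Cmax(σ1, σ2) ≥ ∑_{i∈J1} p1 i + min_{i∈J1} ∑_{j∈P_i} p2 j. -/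
open Finset

lemma pack_lemma {α : Type*} [DecidableEq α] (σ p : α → ℕ) (hp : ∀ a, 1 ≤ p a)
    (hov : ∀ a b, a ≠ b → σ a + p a ≤ σ b ∨ σ b + p b ≤ σ a) :
    ∀ s : Finset α, ∀ T C : ℕ, (∀ a ∈ s, T ≤ σ a) → (∀ a ∈ s, σ a + p a ≤ C) →
      T ≤ C → T + ∑ a ∈ s, p a ≤ C := by
  intro s
  induction s using Finset.strongInduction with
  | _ s ih =>
    intro T C h1 h2 hTC
    rcases s.eq_empty_or_nonempty with rfl | hs
    · simpa
    · obtain ⟨m, hm, hmax⟩ := s.exists_max_image σ hs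
      have key : ∀ a ∈ s.erase m, σ a + p a ≤ σ m := by
        intro a ha
        rcases hov a m (Finset.ne_of_mem_erase ha) with h | h
        · exact h
        · have h1' := hmax a (Finset.mem_of_mem_erase ha)
          have := hp m; omega
      have hrec := ih (s.erase m) (Finset.erase_ssubset hm) T (σ m)
        (fun a ha => h1 a (Finset.mem_of_mem_erase ha)) key (h1 m hm)
      have hsum : ∑ a ∈ s.erase m, p a + p m = ∑ a ∈ s, p a :=
        Finset.sum_erase_add _ _ hm
      have := h2 m hm
      omega

/-- Lower bound LB2: if every inbound job has at least one successor, then for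
every feasible two-machine cross-docking schedule, the makespan is at least
`∑_{i∈J1} p1 i + min_{i∈J1} ∑_{j∈P_i} p2 j`, where `P_i = {j ∈ J2 : i ∈ S_j}`. -/
theorem lower_bound_LB2
    {J1 J2 : Type*} [Fintype J1] [Fintype J2] [Nonempty J1] [Nonempty J2]
    [DecidableEq J1]
    (p1 : J1 → ℕ) (p2 : J2 → ℕ)
    (hp1 : ∀ i, 1 ≤ p1 i) (hp2 : ∀ j, 1 ≤ p2 j)
    (pred : J2 → Finset J1) (hpred : ∀ j, (pred j).Nonempty)
    (hsucc : ∀ i : J1, (univ.filter fun j : J2 => i ∈ pred j).Nonempty)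
    (σ1 : J1 → ℕ) (σ2 : J2 → ℕ)
    (hov1 : ∀ i i', i ≠ i' → σ1 i + p1 i ≤ σ1 i' ∨ σ1 i' + p1 i' ≤ σ1 i)
    (hov2 : ∀ j j', j ≠ j' → σ2 j + p2 j ≤ σ2 j' ∨ σ2 j' + p2 j' ≤ σ2 j)
    (hcd : ∀ j : J2, ∀ i ∈ pred j, σ1 i + p1 i ≤ σ2 j) :
    (∑ i, p1 i)
        + univ.inf' univ_nonempty
            (fun i : J1 => ∑ j ∈ univ.filter (fun j : J2 => i ∈ pred j), p2 j)
      ≤ univ.sup' univ_nonempty (fun j : J2 => σ2 j + p2 j) := by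
  classical
  obtain ⟨m, hm, hmax⟩ := univ.exists_max_image (fun i => σ1 i + p1 i) univ_nonempty
  -- machine 1 packing: all of J1 fits before σ1 m + p1 m
  have hM1 : (∑ i, p1 i) ≤ σ1 m + p1 m := by
    have := pack_lemma σ1 p1 hp1 hov1 univ 0 (σ1 m + p1 m)
      (fun a _ => Nat.zero_le _) (fun a _ => hmax a (mem_univ a)) (Nat.zero_le _)
    simpa using this
  set P := univ.filter (fun j : J2 => m ∈ pred j) with hP
  set C := univ.sup' univ_nonempty (fun j : J2 => σ2 j + p2 j) with hC
  have h1 : ∀ j ∈ P, σ1 m + p1 m ≤ σ2 j := by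
    intro j hj
    exact hcd j m (mem_filter.mp hj).2
  have h2 : ∀ j ∈ P, σ2 j + p2 j ≤ C := fun j _ => by
    rw [hC]; exact le_sup' (fun j => σ2 j + p2 j) (mem_univ j)
  obtain ⟨j0, hj0⟩ := hsucc m
  have hTC : σ1 m + p1 m ≤ C := le_trans (h1 j0 hj0)
    (le_trans (Nat.le_add_right _ _) (h2 j0 hj0))
  have hM2 : σ1 m + p1 m + ∑ j ∈ P, p2 j ≤ C :=
    pack_lemma σ2 p2 hp2 hov2 P (σ1 m + p1 m) C h1 h2 hTC
  have hinf : univ.inf' univ_nonempty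
      (fun i : J1 => ∑ j ∈ univ.filter (fun j : J2 => i ∈ pred j), p2 j)
      ≤ ∑ j ∈ P, p2 j := inf'_le _ (mem_univ m)
  omega
end

section
/- (Initial upper bound for the parallel-dock problem F2(P)|CD|Cmax.) Every parallel-dock cross-docking instance admits a feasible schedule (σ1, σ2) whose makespan satisfies Cmax(σ1, σ2) ≤ (∑_{i∈J1} p1 i)/m1 − (max_{i∈J1} p1 i)/m1 + max_{i∈J1} p1 i + (∑_{j∈J2} p2 j)/m2 − (max_{j∈J2} p2 j)/m2 + max_{j∈J2} p2 j, where the right-hand side is evaluated in ℚ. -/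
/-!
Greedy list scheduling on `m` identical machines starts every job `k` no later than the average
load `(∑ p - p k) / m` of the other jobs, so every job completes by
`(∑ p - p k) / m + p k ≤ (∑ p - max p) / m + max p` (Graham's bound). Running stage 1 greedily
and then stage 2 greedily, shifted to begin once all of stage 1 has finished, respects every
precedence constraint and has makespan at most the sum of the two Graham bounds.
-/

open Finset

section ListScheduling

variable {J : Type*} {m : ℕ} (p : J → ℕ)

def MachineDisjoint (s : Finset J) (σ : J → ℕ) (μ : J → Fin m) : Prop :=
  ∀ k ∈ s, ∀ k' ∈ s, k ≠ k' → μ k = μ k' → σ k + p k ≤ σ k' ∨ σ k' + p k' ≤ σ k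

theorem card_active_le_of_machineDisjoint [Fintype J] {σ : J → ℕ} {μ : J → Fin m}
    (h : MachineDisjoint p univ σ μ) (t : ℕ) :
    #{k | σ k ≤ t ∧ t < σ k + p k} ≤ m := by
  have hinj : Set.InjOn μ (univ.filter fun k => σ k ≤ t ∧ t < σ k + p k) := by
    intro k hk k' hk' hμ
    simp only [coe_filter, mem_univ, true_and, Set.mem_ofPred_eq] at hk hk'
    by_contra hne
    have := h k (mem_univ k) k' (mem_univ k') hne hμ
    omega
  simpa using card_le_card_of_injOn μ (fun k _ => mem_univ (μ k)) hinj

/-- `L i` is the time at which machine `i` becomes free; each new job goes to a machine with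
minimal `L i`, which is at most the average `(∑ i, L i) / m`. -/
theorem exists_greedy_schedule (hm : 0 < m) (s : Finset J) :
    ∃ (σ : J → ℕ) (μ : J → Fin m) (L : Fin m → ℕ),
      MachineDisjoint p s σ μ ∧ (∀ k ∈ s, σ k + p k ≤ L (μ k)) ∧
      ∑ i, L i = ∑ k ∈ s, p k ∧ ∀ k ∈ s, m * σ k + p k ≤ ∑ j ∈ s, p j := by
  classical
  induction s using Finset.induction_on with
  | empty => exact ⟨0, fun _ => ⟨0, hm⟩, 0, by simp [MachineDisjoint]⟩
  | insert a s ha ih =>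
    obtain ⟨σ, μ, L, hdisj, hload, hsum, hstart⟩ := ih
    obtain ⟨i₀, -, hi₀⟩ := exists_min_image univ L ⟨⟨0, hm⟩, mem_univ _⟩
    have hL : m * L i₀ ≤ ∑ i, L i := by
      simpa using card_nsmul_le_sum univ L (L i₀) fun i _ => hi₀ i (mem_univ i)
    have hL_le : ∀ i, L i ≤ Function.update L i₀ (L i₀ + p a) i := by
      intro i
      rcases eq_or_ne i i₀ with rfl | hne <;> simp [*]
    have hne : ∀ k ∈ s, k ≠ a := fun k hk hka => ha (hka ▸ hk)
    refine ⟨Function.update σ a (L i₀), Function.update μ a i₀,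
      Function.update L i₀ (L i₀ + p a), ?_, ?_, ?_, ?_⟩
    · intro k hk k' hk' hkk' hμ
      rcases mem_insert.1 hk with rfl | hks <;> rcases mem_insert.1 hk' with rfl | hks'
      · exact absurd rfl hkk'
      · simp only [Function.update_self, Function.update_of_ne (hne k' hks')] at hμ ⊢
        exact Or.inr (hμ ▸ hload k' hks')
      · simp only [Function.update_self, Function.update_of_ne (hne k hks)] at hμ ⊢
        exact Or.inl (hμ ▸ hload k hks)
      · simp only [Function.update_of_ne (hne k hks), Function.update_of_ne (hne k' hks')] at hμ ⊢
        exact hdisj k hks k' hks' hkk' hμ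
    · intro k hk
      rcases mem_insert.1 hk with rfl | hk
      · simp
      · simp only [Function.update_of_ne (hne k hk)]
        exact (hload k hk).trans (hL_le _)
    · rw [sum_update_of_mem (mem_univ i₀), sum_insert ha, ← hsum,
        ← add_sum_erase univ L (mem_univ i₀), sdiff_singleton_eq_erase]
      ring
    · intro k hk
      rw [sum_insert ha]
      rcases mem_insert.1 hk with rfl | hk
      · simp only [Function.update_self]
        omega
      · simp only [Function.update_of_ne (hne k hk)]
        have := hstart k hk
        omega

end ListScheduling

def grahamBound {J : Type*} [Fintype J] [Nonempty J] (p : J → ℕ) (m : ℕ) : ℚ :=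
  (∑ k, (p k : ℚ)) / m - ((univ.sup' univ_nonempty p : ℕ) : ℚ) / m + (univ.sup' univ_nonempty p : ℕ)

theorem add_le_sub_div_add {m x P M S : ℚ} (hm : 1 ≤ m) (hPM : P ≤ M) (h : m * x + P ≤ S) :
    x + P ≤ (S - M) / m + M := by
  rw [div_add' _ _ _ (by positivity), le_div_iff₀ (by positivity)]
  nlinarith

theorem exists_schedule_completion_le_grahamBound {J : Type*} [Fintype J] [Nonempty J]
    (p : J → ℕ) {m : ℕ} (hm : 1 ≤ m) :
    ∃ σ : J → ℕ, (∀ t, #{k | σ k ≤ t ∧ t < σ k + p k} ≤ m) ∧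
      ∀ k, ((σ k + p k : ℕ) : ℚ) ≤ grahamBound p m := by
  obtain ⟨σ, μ, -, hdisj, -, -, hstart⟩ := exists_greedy_schedule p hm (univ : Finset J)
  refine ⟨σ, card_active_le_of_machineDisjoint p hdisj, fun k => ?_⟩
  have hk : (m : ℚ) * σ k + p k ≤ ∑ j, (p j : ℚ) := by exact_mod_cast hstart k (mem_univ k)
  have hmax : (p k : ℚ) ≤ (univ.sup' univ_nonempty p : ℕ) := by
    exact_mod_cast le_sup' p (mem_univ k)
  rw [grahamBound, ← sub_div, Nat.cast_add]
  exact add_le_sub_div_add (by exact_mod_cast hm) hmax hk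

theorem parallel_dock_initial_upper_bound_general
    {J1 J2 : Type*} [Fintype J1] [Fintype J2] [Nonempty J1] [Nonempty J2]
    (p1 : J1 → ℕ) (p2 : J2 → ℕ)
    (pred : J2 → Finset J1)
    (m1 m2 : ℕ) (hm1 : 1 ≤ m1) (hm2 : 1 ≤ m2) :
    ∃ (σ1 : J1 → ℕ) (σ2 : J2 → ℕ),
      ((∀ t : ℕ, (univ.filter fun i : J1 => σ1 i ≤ t ∧ t < σ1 i + p1 i).card ≤ m1) ∧
       (∀ t : ℕ, (univ.filter fun j : J2 => σ2 j ≤ t ∧ t < σ2 j + p2 j).card ≤ m2) ∧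
       (∀ j : J2, ∀ i ∈ pred j, σ1 i + p1 i ≤ σ2 j)) ∧
      ((univ.sup' univ_nonempty (fun j : J2 => σ2 j + p2 j) : ℕ) : ℚ)
        ≤ (∑ i, (p1 i : ℚ)) / (m1 : ℚ)
          - ((univ.sup' univ_nonempty (fun i => p1 i) : ℕ) : ℚ) / (m1 : ℚ)
          + ((univ.sup' univ_nonempty (fun i => p1 i) : ℕ) : ℚ)
          + (∑ j, (p2 j : ℚ)) / (m2 : ℚ)
          - ((univ.sup' univ_nonempty (fun j => p2 j) : ℕ) : ℚ) / (m2 : ℚ)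
          + ((univ.sup' univ_nonempty (fun j => p2 j) : ℕ) : ℚ) := by
  obtain ⟨σ1, hcap1, hdone1⟩ := exists_schedule_completion_le_grahamBound p1 hm1
  obtain ⟨τ, hcap2, hdone2⟩ := exists_schedule_completion_le_grahamBound p2 hm2
  have hT : ((univ.sup' univ_nonempty fun i => σ1 i + p1 i : ℕ) : ℚ) ≤ grahamBound p1 m1 := by
    obtain ⟨i, -, hi⟩ := exists_mem_eq_sup' univ_nonempty fun i => σ1 i + p1 i
    rw [hi]
    exact hdone1 i
  set T := univ.sup' univ_nonempty fun i => σ1 i + p1 i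
  refine ⟨σ1, fun j => T + τ j, ⟨hcap1, fun t => ?_, fun j i _ => ?_⟩, ?_⟩
  · refine (card_le_card fun j hj => ?_).trans (hcap2 (t - T))
    simp only [mem_filter, mem_univ, true_and] at hj ⊢
    omega
  · exact le_add_right (le_sup' (fun i => σ1 i + p1 i) (mem_univ i))
  · obtain ⟨j, -, hj⟩ := exists_mem_eq_sup' univ_nonempty fun j => T + τ j + p2 j
    calc ((univ.sup' univ_nonempty fun j => T + τ j + p2 j : ℕ) : ℚ)
        = T + ((τ j + p2 j : ℕ) : ℚ) := by rw [hj]; push_cast; ring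
      _ ≤ grahamBound p1 m1 + grahamBound p2 m2 := add_le_add hT (hdone2 j)
      _ = _ := by unfold grahamBound; ring

/-- Initial upper bound for the parallel-dock problem `F2(P)|CD|Cmax`: every
parallel-dock cross-docking instance admits a feasible schedule whose makespan is
at most `(∑ p1)/m1 − (max p1)/m1 + max p1 + (∑ p2)/m2 − (max p2)/m2 + max p2`
(evaluated in `ℚ`). -/
theorem parallel_dock_initial_upper_bound
    {J1 J2 : Type*} [Fintype J1] [Fintype J2] [Nonempty J1] [Nonempty J2]
    (p1 : J1 → ℕ) (p2 : J2 → ℕ)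
    (hp1 : ∀ i, 1 ≤ p1 i) (hp2 : ∀ j, 1 ≤ p2 j)
    (pred : J2 → Finset J1) (hpred : ∀ j, (pred j).Nonempty)
    (m1 m2 : ℕ) (hm1 : 1 ≤ m1) (hm2 : 1 ≤ m2) :
    ∃ (σ1 : J1 → ℕ) (σ2 : J2 → ℕ),
      ((∀ t : ℕ, (univ.filter fun i : J1 => σ1 i ≤ t ∧ t < σ1 i + p1 i).card ≤ m1) ∧
       (∀ t : ℕ, (univ.filter fun j : J2 => σ2 j ≤ t ∧ t < σ2 j + p2 j).card ≤ m2) ∧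
       (∀ j : J2, ∀ i ∈ pred j, σ1 i + p1 i ≤ σ2 j)) ∧
      ((univ.sup' univ_nonempty (fun j : J2 => σ2 j + p2 j) : ℕ) : ℚ)
        ≤ (∑ i, (p1 i : ℚ)) / (m1 : ℚ)
          - ((univ.sup' univ_nonempty (fun i => p1 i) : ℕ) : ℚ) / (m1 : ℚ)
          + ((univ.sup' univ_nonempty (fun i => p1 i) : ℕ) : ℚ)
          + (∑ j, (p2 j : ℚ)) / (m2 : ℚ)
          - ((univ.sup' univ_nonempty (fun j => p2 j) : ℕ) : ℚ) / (m2 : ℚ)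
          + ((univ.sup' univ_nonempty (fun j => p2 j) : ℕ) : ℚ) :=
  parallel_dock_initial_upper_bound_general p1 p2 pred m1 m2 hm1 hm2
end
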